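/- If (T,σ) is a binary tree explaining the BMG (G,σ), then (T,σ) displays every triple in the extended triple set R^bin(G,σ). -/

import Mathlib

/-- A rooted phylogenetic tree with leaf set `V`, encoded by its hierarchy of clusters
(the cluster of a vertex is the set of leaves below it; inner vertices of a phylogenetic
tree have at least two children, so vertices correspond bijectively to clusters). -/
structure PhyloTree (V : Type*) where
  clusters : Set (Set V)
  nonempty_of_mem : ∀ A ∈ clusters, A.Nonempty
  univ_mem : Set.univ ∈ clusters
  singleton_mem : ∀ v : V, {v} ∈ clusters
  nested : ∀ A ∈ clusters, ∀ B ∈ clusters, A ⊆ B ∨ B ⊆ A ∨ Disjoint A B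

namespace PhyloTree

variable {V : Type*}

/-- The cluster of the last common ancestor of `x` and `y`: the smallest cluster
containing both (the clusters containing `x` and `y` form a chain, so their
intersection is the smallest one). -/
def lca (T : PhyloTree V) (x y : V) : Set V :=
  ⋂₀ {A | A ∈ T.clusters ∧ x ∈ A ∧ y ∈ A}

/-- The rooted triple `xy|z` (on three pairwise distinct leaves) is displayed by `T`:
`lca(x,y) ≺ lca(x,z) = lca(y,z)`. -/
def Displays (T : PhyloTree V) (x y z : V) : Prop :=
  x ≠ y ∧ x ≠ z ∧ y ≠ z ∧ T.lca x y ⊂ T.lca x z ∧ T.lca x z = T.lca y z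

/-- `T` displays every triple of `R`; a triple `(x, y, z)` encodes `xy|z`. -/
def DisplaysSet (T : PhyloTree V) (R : Set (V × V × V)) : Prop :=
  ∀ t ∈ R, T.Displays t.1 t.2.1 t.2.2

/-- `r(T)`, the set of triples displayed by `T`. -/
def triples (T : PhyloTree V) : Set (V × V × V) :=
  {t | T.Displays t.1 t.2.1 t.2.2}

/-- `T` is binary: every inner vertex (cluster with at least two leaves) has exactly
two children, i.e. splits into two disjoint proper subclusters. -/
def IsBinary (T : PhyloTree V) : Prop :=
  ∀ A ∈ T.clusters, 1 < A.ncard →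
    ∃ B ∈ T.clusters, ∃ D ∈ T.clusters,
      Disjoint B D ∧ B ∪ D = A ∧ B ⊂ A ∧ D ⊂ A

/-- `T'` is a refinement of `T`: they have the same leaf set and `T` is obtained from
`T'` by contracting inner edges, i.e. every cluster of `T` is a cluster of `T'`. -/
def Refines (T' T : PhyloTree V) : Prop :=
  T.clusters ⊆ T'.clusters

end PhyloTree

section BMG

variable {V C : Type*}

/-- `y` is a best match of `x` in the leaf-colored tree `(T,σ)`. -/
def bestMatch (T : PhyloTree V) (σ : V → C) (x y : V) : Prop :=
  σ x ≠ σ y ∧ ∀ y' : V, σ y' = σ y → T.lca x y ⊆ T.lca x y'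

/-- The leaf-colored tree `(T,σ)` explains the vertex-colored digraph `(E,σ)`,
i.e. `(E,σ)` is the best match graph of `(T,σ)`. -/
def Explains (T : PhyloTree V) (σ : V → C) (E : V → V → Prop) : Prop :=
  ∀ x y, E x y ↔ bestMatch T σ x y

/-- `(E,σ)` is a best match graph. -/
def IsBMG (E : V → V → Prop) (σ : V → C) : Prop :=
  ∃ T : PhyloTree V, Explains T σ E

/-- `(E,σ)` is binary-explainable. -/
def BinaryExplainable (E : V → V → Prop) (σ : V → C) : Prop :=
  ∃ T : PhyloTree V, T.IsBinary ∧ Explains T σ E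

/-- The informative triples `R(G,σ)`: `(a,b,b')` encodes `ab|b'`. -/
def informativeTriples (E : V → V → Prop) (σ : V → C) : Set (V × V × V) :=
  {t | σ t.1 ≠ σ t.2.1 ∧ σ t.2.1 = σ t.2.2 ∧ E t.1 t.2.1 ∧ ¬ E t.1 t.2.2}

/-- The forbidden triples `F(G,σ)`: `(a,b,b')` encodes `ab|b'`. -/
def forbiddenTriples (E : V → V → Prop) (σ : V → C) : Set (V × V × V) :=
  {t | σ t.1 ≠ σ t.2.1 ∧ σ t.2.1 = σ t.2.2 ∧ t.2.1 ≠ t.2.2 ∧ E t.1 t.2.1 ∧ E t.1 t.2.2}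

/-- The extended triple set `R^bin(G,σ) = R(G,σ) ∪ {bb'|a : ab|b' ∈ F(G,σ)}`. -/
def Rbin (E : V → V → Prop) (σ : V → C) : Set (V × V × V) :=
  informativeTriples E σ ∪ {t | (t.2.2, t.1, t.2.1) ∈ forbiddenTriples E σ}

/-- Properly colored: arcs only between vertices of distinct colors. -/
def ProperlyColored (E : V → V → Prop) (σ : V → C) : Prop :=
  ∀ x y, E x y → σ x ≠ σ y

/-- sf-colored: properly colored and every vertex has, for each color (of the graph)
different from its own, at least one out-neighbor of that color. -/
def SfColored (E : V → V → Prop) (σ : V → C) : Prop :=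
  ProperlyColored E σ ∧ ∀ x y : V, σ y ≠ σ x → ∃ z, E x z ∧ σ z = σ y

/-- A triple set is consistent if some tree displays all of its triples. -/
def Consistent (R : Set (V × V × V)) : Prop :=
  ∃ T : PhyloTree V, T.DisplaysSet R

/-- The closure `cl(R)`: all triples displayed by every tree displaying `R`. -/
def tripleClosure (R : Set (V × V × V)) : Set (V × V × V) :=
  {t | ∀ T : PhyloTree V, T.DisplaysSet R → T.Displays t.1 t.2.1 t.2.2}

/-- `(T,σ)` is a least resolved tree for `(E,σ)`: it explains `(E,σ)` and no tree
obtained from it by contracting an edge (i.e. by removing a non-root inner cluster)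
explains `(E,σ)`. -/
def IsLRT (T : PhyloTree V) (σ : V → C) (E : V → V → Prop) : Prop :=
  Explains T σ E ∧
    ∀ A ∈ T.clusters, A ≠ Set.univ → 1 < A.ncard →
      ∀ T' : PhyloTree V, T'.clusters = T.clusters \ {A} → ¬ Explains T' σ E

end BMG

section Aho

variable {V : Type*}

/-- Adjacency in the Aho graph `[R,L]`: `x` and `y` are joined whenever `xy|z ∈ R`
for some `z ∈ L` (only triples with all leaves in `L` are taken into account). -/
def ahoAdj (R : Set (V × V × V)) (L : Set V) (x y : V) : Prop :=
  x ∈ L ∧ y ∈ L ∧ ∃ z ∈ L, (x, y, z) ∈ R ∨ (y, x, z) ∈ R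

/-- The vertex set of the connected component of `x` in the Aho graph `[R,L]`. -/
def ahoComponent (R : Set (V × V × V)) (L : Set V) (x : V) : Set V :=
  {y | Relation.ReflTransGen (ahoAdj R L) x y}

/-- The clusters of the Aho tree `Aho(R, V)`: the full leaf set, and recursively the
connected components of the Aho graphs. -/
inductive IsAhoCluster (R : Set (V × V × V)) : Set V → Prop
  | univ : IsAhoCluster R Set.univ
  | component {L : Set V} {x : V} :
      IsAhoCluster R L → x ∈ L → IsAhoCluster R (ahoComponent R L x)

/-- `T` is the Aho tree (`BUILD` tree) of the triple set `R` on the full leaf set. -/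
def IsAhoTree (R : Set (V × V × V)) (T : PhyloTree V) : Prop :=
  T.clusters = {A | IsAhoCluster R A}

/-- The union of the leaf sets of the triples in `R`. -/
def tripleLeaves (R : Set (V × V × V)) : Set V :=
  {v | ∃ t ∈ R, v = t.1 ∨ v = t.2.1 ∨ v = t.2.2}

end Aho

/-!
A triple `ab|b'` of `R(G,σ)` is displayed by any explaining tree: `b` is a best match of `a`
while `b'` (of the same color) is not, so `lca(a,b) ⊊ lca(a,b')`. For a forbidden triple
`ab|b'`, both `b` and `b'` are best matches of `a`, so `lca(a,b) = lca(a,b')`. In a binary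
tree this vertex has exactly two children; `a` lies below one of them and, by minimality of
the lca, `b` and `b'` both lie below the other, whence `lca(b,b') ⊊ lca(b,a)`.
-/

namespace PhyloTree

variable {V : Type*} (T : PhyloTree V)

lemma lca_subset {A : Set V} (hA : A ∈ T.clusters) {x y : V} (hx : x ∈ A) (hy : y ∈ A) :
    T.lca x y ⊆ A :=
  Set.sInter_subset_of_mem ⟨hA, hx, hy⟩

lemma lca_comm (x y : V) : T.lca x y = T.lca y x := by
  simp only [lca, and_comm (a := x ∈ _)]

variable [Finite V]

lemma lca_spec (x y : V) : T.lca x y ∈ T.clusters ∧ x ∈ T.lca x y ∧ y ∈ T.lca x y := by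
  set S : Set (Set V) := {A | A ∈ T.clusters ∧ x ∈ A ∧ y ∈ A}
  obtain ⟨M, hM⟩ := (Set.toFinite S).exists_minimal ⟨Set.univ, T.univ_mem, trivial, trivial⟩
  have hM_le : ∀ A ∈ S, M ⊆ A := fun A hA ↦ by
    rcases T.nested M hM.prop.1 A hA.1 with h | h | h
    · exact h
    · exact hM.le_of_le hA h
    · exact absurd hA.2.1 (Set.disjoint_left.mp h hM.prop.2.1)
  have : T.lca x y = M :=
    (Set.sInter_subset_of_mem hM.prop).antisymm (Set.subset_sInter hM_le)
  exact this ▸ hM.prop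

lemma lca_mem_clusters (x y : V) : T.lca x y ∈ T.clusters := (T.lca_spec x y).1

lemma mem_lca_left (x y : V) : x ∈ T.lca x y := (T.lca_spec x y).2.1

lemma mem_lca_right (x y : V) : y ∈ T.lca x y := (T.lca_spec x y).2.2

lemma lca_eq_of_lca_ssubset {x y z : V} (h : T.lca x y ⊂ T.lca x z) :
    T.lca y z = T.lca x z := by
  refine (T.lca_subset (T.lca_mem_clusters x z) (h.subset (T.mem_lca_right x y))
    (T.mem_lca_right x z)).antisymm ?_
  rcases T.nested _ (T.lca_mem_clusters y z) _ (T.lca_mem_clusters x y) with h' | h' | h'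
  · exact absurd (T.lca_subset (T.lca_mem_clusters x y) (T.mem_lca_left x y)
      (h' (T.mem_lca_right y z))) h.not_subset
  · exact T.lca_subset (T.lca_mem_clusters y z) (h' (T.mem_lca_left x y)) (T.mem_lca_right y z)
  · exact absurd (T.mem_lca_left y z) (Set.disjoint_left.mp h'.symm (T.mem_lca_right x y))

lemma displays_of_lca_ssubset {x y z : V} (hxy : x ≠ y) (hxz : x ≠ z)
    (h : T.lca x y ⊂ T.lca x z) : T.Displays x y z :=
  ⟨hxy, hxz, by rintro rfl; exact h.ne rfl, h, (T.lca_eq_of_lca_ssubset h).symm⟩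

lemma mem_right_of_union_eq_lca {a w : V} {P Q : Set V} (hP : P ∈ T.clusters)
    (hPQ : P ∪ Q = T.lca a w) (hPA : P ⊂ T.lca a w) (ha : a ∈ P) : w ∈ Q := by
  have hw : w ∈ P ∪ Q := hPQ ▸ T.mem_lca_right a w
  exact hw.resolve_left fun hwP ↦ hPA.not_subset (T.lca_subset hP ha hwP)

variable {T} in
lemma IsBinary.lca_ssubset_of_lca_eq (hbin : T.IsBinary) {a b b' : V} (hab : a ≠ b)
    (h : T.lca a b = T.lca a b') : T.lca b b' ⊂ T.lca b a := by
  have hcard : 1 < (T.lca a b).ncard :=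
    (Set.one_lt_ncard (Set.toFinite _)).mpr ⟨a, T.mem_lca_left a b, b, T.mem_lca_right a b, hab⟩
  obtain ⟨B, hB, D, hD, -, hBD, hBA, hDA⟩ := hbin _ (T.lca_mem_clusters a b) hcard
  rw [T.lca_comm b a]
  suffices ∀ P ∈ T.clusters, ∀ Q ∈ T.clusters, P ∪ Q = T.lca a b → P ⊂ T.lca a b →
      Q ⊂ T.lca a b → a ∈ P → T.lca b b' ⊂ T.lca a b by
    rcases hBD.symm ▸ T.mem_lca_left a b with haB | haD
    · exact this B hB D hD hBD hBA hDA haB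
    · exact this D hD B hB (Set.union_comm B D ▸ hBD) hDA hBA haD
  intro P hP Q hQ hPQ hPA hQA haP
  have hbQ : b ∈ Q := T.mem_right_of_union_eq_lca hP hPQ hPA haP
  have hb'Q : b' ∈ Q := T.mem_right_of_union_eq_lca hP (h ▸ hPQ) (h ▸ hPA) haP
  exact (T.lca_subset hQ hbQ hb'Q).trans_ssubset hQA

end PhyloTree

section BestMatch

variable {V C : Type*} {T : PhyloTree V} {σ : V → C}

lemma bestMatch.lca_eq {x y z : V} (hy : bestMatch T σ x y) (hz : bestMatch T σ x z)
    (hyz : σ y = σ z) : T.lca x y = T.lca x z :=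
  (hy.2 z hyz.symm).antisymm (hz.2 y hyz)

lemma bestMatch.lca_ssubset_of_not_bestMatch {x y z : V} (hy : bestMatch T σ x y)
    (hyz : σ y = σ z) (hz : ¬ bestMatch T σ x z) : T.lca x y ⊂ T.lca x z :=
  ⟨hy.2 z hyz.symm, fun hzy ↦ hz ⟨hyz ▸ hy.1, fun w hw ↦ hzy.trans (hy.2 w (hw.trans hyz.symm))⟩⟩

end BestMatch

/-- Lemma: bin-displays-Rbin.
If `(T,σ)` is a binary tree explaining the BMG `(G,σ)`, then `(T,σ)` displays every
triple in the extended triple set `R^bin(G,σ)`. -/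
theorem stmt1 {V C : Type*} [Fintype V] (E : V → V → Prop) (σ : V → C)
    (T : PhyloTree V) (hbin : T.IsBinary) (hexp : Explains T σ E) :
    T.DisplaysSet (Rbin E σ) := by
  rintro ⟨a, b, b'⟩ (⟨hσab, hσbb', hEb, hEb'⟩ | ⟨hσb'a, hσab, hab, hEa, hEb⟩)
  · have hb := (hexp a b).mp hEb
    have hb' : ¬ bestMatch T σ a b' := fun h ↦ hEb' ((hexp a b').mpr h)
    have hab : a ≠ b := fun h ↦ hσab (congrArg σ h)
    have hab' : a ≠ b' := fun h ↦ hσab ((congrArg σ h).trans hσbb'.symm)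
    exact T.displays_of_lca_ssubset hab hab' (hb.lca_ssubset_of_not_bestMatch hσbb' hb')
  · -- here the triple is `ab|b'` with `(b', a, b) ∈ F(G,σ)`
    have hlca := ((hexp b' a).mp hEa).lca_eq ((hexp b' b).mp hEb) hσab
    have hab' : a ≠ b' := fun h ↦ hσb'a (congrArg σ h).symm
    exact T.displays_of_lca_ssubset hab hab' (hbin.lca_ssubset_of_lca_eq hab'.symm hlca)
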